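/- arXiv:1207.3850 — 5 statements merged into one kernel-verified Lean document; each statement's English description precedes it below -/
import Mathlib

section
/- Let G be a compact convex subset of ℝ^M, let R_1, ..., R_K : G → ℝ be continuous, and let R* = max_{p ∈ G} min_{i ∈ {1,...,K}} R_i(p), attained at p*. Define B = { i : R_i(p*) = R* }. Then B is nonempty, R* < R_j(p*) for all j ∉ B, and p* is a local maximum for the set B in the following sense: there exists ε > 0 such that for every p ∈ G with ‖p − p*‖ < ε, there exists some i ∈ B with R_i(p) ≤ R_i(p*). -/
/-!
Near `p*` every non-bottleneck function stays strictly above `R*`, by continuity. At such a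
point `p`, a function attaining `min_i R_i(p) ≤ R*` therefore has to be a bottleneck one.
-/

open Filter Topology

section Bottleneck

variable {ι X : Type*} [Finite ι] [TopologicalSpace X] {f : ι → X → ℝ} {s : Set X} {x : X}

theorem ciInf_lt_apply_of_ne (g : ι → ℝ) {j : ι} (hj : g j ≠ ⨅ i, g i) : ⨅ i, g i < g j :=
  lt_of_le_of_ne (ciInf_le (Finite.bddBelow_range g) j) hj.symm

theorem eventually_ciInf_lt_of_ne (hf : ∀ i, ContinuousWithinAt (f i) s x) :
    ∀ᶠ p in 𝓝[s] x, ∀ j, f j x ≠ ⨅ i, f i x → ⨅ i, f i x < f j p :=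
  eventually_all.2 fun j => by
    by_cases hj : f j x = ⨅ i, f i x
    · exact .of_forall fun _ hne => absurd hj hne
    · exact ((hf j).eventually (eventually_gt_nhds (ciInf_lt_apply_of_ne (f · x) hj))).mono
        fun _ h _ => h

theorem eventually_exists_ciInf_eq_and_le [Nonempty ι] (hf : ∀ i, ContinuousWithinAt (f i) s x)
    (hmax : ∀ p ∈ s, ⨅ i, f i p ≤ ⨅ i, f i x) :
    ∀ᶠ p in 𝓝[s] x, ∃ i, f i x = ⨅ j, f j x ∧ f i p ≤ f i x := by
  filter_upwards [self_mem_nhdsWithin, eventually_ciInf_lt_of_ne hf] with p hp hlt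
  obtain ⟨i, hi⟩ := exists_eq_ciInf_of_finite (f := (f · p))
  have hile : f i p ≤ ⨅ j, f j x := hi ▸ hmax p hp
  have hbottleneck : f i x = ⨅ j, f j x := by
    by_contra hne
    exact (hlt i hne).not_ge hile
  exact ⟨i, hbottleneck, hbottleneck ▸ hile⟩

end Bottleneck

theorem stmt_1_general {M K : ℕ} (hK : 0 < K)
    (G : Set (EuclideanSpace ℝ (Fin M)))
    (R : Fin K → EuclideanSpace ℝ (Fin M) → ℝ)
    (hR : ∀ i, ContinuousOn (R i) G)
    (pstar : EuclideanSpace ℝ (Fin M)) (hpstar : pstar ∈ G)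
    (hopt : ∀ p ∈ G, (⨅ i : Fin K, R i p) ≤ ⨅ i : Fin K, R i pstar)
    (Rstar : ℝ) (hRstar : Rstar = ⨅ i : Fin K, R i pstar)
    (B : Set (Fin K)) (hB : B = {i | R i pstar = Rstar}) :
    B.Nonempty ∧ (∀ j ∉ B, Rstar < R j pstar) ∧
      ∃ ε > 0, ∀ p ∈ G, ‖p - pstar‖ < ε → ∃ i ∈ B, R i p ≤ R i pstar := by
  subst hRstar hB
  have : Nonempty (Fin K) := ⟨⟨0, hK⟩⟩
  have hlocal := eventually_exists_ciInf_eq_and_le (fun i => (hR i).continuousWithinAt hpstar) hopt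
  obtain ⟨ε, hε, hball⟩ := Metric.mem_nhdsWithin_iff.1 hlocal
  refine ⟨exists_eq_ciInf_of_finite, fun j hj => ciInf_lt_apply_of_ne (R · pstar) hj,
    ε, hε, fun p hp hdist => ?_⟩
  exact hball ⟨by rwa [Metric.mem_ball, dist_eq_norm], hp⟩

/-- Lemma 1 of the paper: necessary condition for maximin
optimality — the bottleneck set B is nonempty, non-bottleneck functions are
strictly above R*, and p* is a local simultaneous maximum for B. -/
theorem stmt_1 {M K : ℕ} (hK : 0 < K)
    (G : Set (EuclideanSpace ℝ (Fin M)))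
    (hGne : G.Nonempty) (hGcomp : IsCompact G) (hGconv : Convex ℝ G)
    (R : Fin K → EuclideanSpace ℝ (Fin M) → ℝ)
    (hR : ∀ i, ContinuousOn (R i) G)
    (pstar : EuclideanSpace ℝ (Fin M)) (hpstar : pstar ∈ G)
    (hopt : ∀ p ∈ G, (⨅ i : Fin K, R i p) ≤ ⨅ i : Fin K, R i pstar)
    (Rstar : ℝ) (hRstar : Rstar = ⨅ i : Fin K, R i pstar)
    (B : Set (Fin K)) (hB : B = {i | R i pstar = Rstar}) :
    B.Nonempty ∧ (∀ j ∉ B, Rstar < R j pstar) ∧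
      ∃ ε > 0, ∀ p ∈ G, ‖p - pstar‖ < ε → ∃ i ∈ B, R i p ≤ R i pstar :=
  stmt_1_general hK G R hR pstar hpstar hopt Rstar hRstar B hB
end

section
/- Consider the four-node phase-fading HD-MRC with schedule p = (p₀, p₁, p₂, p₃) ≥ 0, p₀+p₁+p₂+p₃ = 1, and reception rates r₂ = (p₀+p₁)·γ₂, r₃ = p₀·a₃ + p₂·b₃, r₄ = p₀·a₄ + p₁·b₄ + p₂·c₄ + p₃·d₄, where γ₂, a₃, b₃, a₄, b₄, c₄, d₄ are positive constants with a₄ ≤ b₄, a₄ ≤ c₄, c₄ ≤ d₄, b₄ ≤ d₄. If γ₂ / a₃ < (b₄ − γ₂)/(b₄ − a₄) and the open interval ( γ₂/a₃, (b₄−γ₂)/(b₄−a₄) ) intersects [0,1], then for any p₀* in that intersection, the schedule p* = (p₀*, 1−p₀*, 0, 0) satisfies r₂(p*) < r₃(p*), r₂(p*) < r₄(p*), and r₂(p*) = max over all feasible schedules p of r₂(p). -/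
/-- |B| = 1 case of the optimal schedule for the four-node
phase-fading HD-MRC: the schedule (p₀, 1−p₀, 0, 0) with p₀ in the interval
(γ₂/a₃, (b₄−γ₂)/(b₄−a₄)) ∩ [0,1] satisfies r₂ < r₃, r₂ < r₄, and maximizes r₂. -/
theorem stmt_7 (γ₂ a₃ b₃ a₄ b₄ c₄ d₄ : ℝ)
    (hγ₂ : 0 < γ₂) (ha₃ : 0 < a₃) (hb₃ : 0 < b₃) (ha₄ : 0 < a₄)
    (hb₄ : 0 < b₄) (hc₄ : 0 < c₄) (hd₄ : 0 < d₄)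
    (hab : a₄ ≤ b₄) (hac : a₄ ≤ c₄) (hcd : c₄ ≤ d₄) (hbd : b₄ ≤ d₄)
    (r₂ r₃ r₄ : (Fin 4 → ℝ) → ℝ)
    (hr₂ : ∀ q, r₂ q = (q 0 + q 1) * γ₂)
    (hr₃ : ∀ q, r₃ q = q 0 * a₃ + q 2 * b₃)
    (hr₄ : ∀ q, r₄ q = q 0 * a₄ + q 1 * b₄ + q 2 * c₄ + q 3 * d₄)
    (p₀ : ℝ) (h1 : γ₂ / a₃ < p₀) (h2 : p₀ < (b₄ - γ₂) / (b₄ - a₄))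
    (h3 : 0 ≤ p₀) (h4 : p₀ ≤ 1)
    (p : Fin 4 → ℝ) (hp : p = ![p₀, 1 - p₀, 0, 0]) :
    r₂ p < r₃ p ∧ r₂ p < r₄ p ∧
      ∀ q : Fin 4 → ℝ, (∀ i, 0 ≤ q i) → q 0 + q 1 + q 2 + q 3 = 1 →
        r₂ q ≤ r₂ p := by
  subst hp
  simp only [hr₂, hr₃, hr₄, Matrix.cons_val_zero, Matrix.cons_val_one, Matrix.head_cons,
    Matrix.cons_val_two, Matrix.tail_cons, Matrix.cons_val_three]
  have hsum : (p₀ + (1 - p₀)) * γ₂ = γ₂ := by ring_nf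
  refine ⟨?_, ?_, ?_⟩
  · rw [hsum]
    have := (div_lt_iff₀ ha₃).mp h1
    linarith
  · rw [hsum]
    rcases eq_or_lt_of_le hab with h | h
    · exfalso
      rw [← h] at h2
      simp at h2
      linarith
    · have := (lt_div_iff₀ (by linarith : (0:ℝ) < b₄ - a₄)).mp h2
      nlinarith
  · intro q hq hsum1
    rw [hsum]
    have h0 := hq 0; have h1' := hq 1; have h2' := hq 2; have h3' := hq 3
    nlinarith [hq 2, hq 3]
end

section
/- Consider the four-node phase-fading HD-MRC with reception rates as affine functions of p=(p₀,p₁,p₂,p₃): r₂ = (p₀+p₁)γ₂, r₃ = p₀a₃ + p₂b₃ with positive constants satisfying γ₂ > a₃. Among all schedules p with p₀+p₁+p₂+p₃=1, p_i ≥ 0, and r₂(p)=r₃(p), the common value r₂(p)=r₃(p) is maximized by p* with p₀* = b₃/(b₃ + γ₂ − a₃), p₂* = (γ₂ − a₃)/(b₃ + γ₂ − a₃), p₁* = p₃* = 0, achieving common value γ₂·b₃/(b₃ + γ₂ − a₃). -/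
/-!
Write `s = p₀ + p₁` for the fraction of time relay 2 listens. Eliminating `p₂` with the budget
`p₀ + p₁ + p₂ + p₃ = 1`, the balance `s γ₂ = p₀ a₃ + p₂ b₃` becomes
`s (b₃ + γ₂ - a₃) = b₃ - b₃ p₃ - a₃ p₁ ≤ b₃`, so the common rate `s γ₂` is at most
`γ₂ b₃ / (b₃ + γ₂ - a₃)`, with equality exactly when `p₁ = p₃ = 0`.
-/

section
variable {γ a b x y z w : ℝ}

theorem listen_mul_le_of_rates_eq (ha : 0 ≤ a) (hb : 0 ≤ b) (hy : 0 ≤ y) (hw : 0 ≤ w)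
    (hsum : x + y + z + w = 1) (hrates : (x + y) * γ = x * a + z * b) :
    (x + y) * (b + γ - a) ≤ b := by
  have h : (x + y) * (b + γ - a) = b - b * w - a * y := by
    linear_combination hrates + b * hsum
  rw [h]
  linarith [mul_nonneg hb hw, mul_nonneg ha hy]

theorem common_rate_le_of_rates_eq (ha : 0 ≤ a) (hb : 0 ≤ b) (hγa : a < γ) (hy : 0 ≤ y)
    (hw : 0 ≤ w) (hsum : x + y + z + w = 1) (hrates : (x + y) * γ = x * a + z * b) :
    (x + y) * γ ≤ γ * b / (b + γ - a) := by
  rw [le_div_iff₀ (by linarith)]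
  calc (x + y) * γ * (b + γ - a) = γ * ((x + y) * (b + γ - a)) := by ring
    _ ≤ γ * b := mul_le_mul_of_nonneg_left
        (listen_mul_le_of_rates_eq ha hb hy hw hsum hrates) (by linarith)

end

theorem stmt_8_general (γ₂ a₃ b₃ : ℝ) (ha₃ : 0 < a₃) (hb₃ : 0 < b₃)
    (hga : a₃ < γ₂)
    (r₂ r₃ : (Fin 4 → ℝ) → ℝ)
    (hr₂ : ∀ q, r₂ q = (q 0 + q 1) * γ₂)
    (hr₃ : ∀ q, r₃ q = q 0 * a₃ + q 2 * b₃)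
    (p : Fin 4 → ℝ)
    (hp : p = ![b₃ / (b₃ + γ₂ - a₃), 0, (γ₂ - a₃) / (b₃ + γ₂ - a₃), 0]) :
    (∀ i, 0 ≤ p i) ∧ p 0 + p 1 + p 2 + p 3 = 1 ∧
    r₂ p = r₃ p ∧ r₂ p = γ₂ * b₃ / (b₃ + γ₂ - a₃) ∧
    ∀ q : Fin 4 → ℝ, (∀ i, 0 ≤ q i) → q 0 + q 1 + q 2 + q 3 = 1 →
      r₂ q = r₃ q → r₂ q ≤ γ₂ * b₃ / (b₃ + γ₂ - a₃) := by
  have hD : 0 < b₃ + γ₂ - a₃ := by linarith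
  subst hp
  simp only [hr₂, hr₃, Matrix.cons_val_zero, Matrix.cons_val_one, Matrix.cons_val, add_zero]
  refine ⟨?_, by field_simp; ring, by ring, by ring, fun q hq hsum hrates =>
    common_rate_le_of_rates_eq ha₃.le hb₃.le hga (hq 1) (hq 3) hsum hrates⟩
  intro i
  fin_cases i <;> simp [div_nonneg, hb₃.le, hD.le, hga.le]

/-- |B| = 2 case of the optimal schedule for the four-node
phase-fading HD-MRC: among all schedules with r₂ = r₃, the common value is
maximized by p* = (b₃/(b₃+γ₂−a₃), 0, (γ₂−a₃)/(b₃+γ₂−a₃), 0), achieving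
γ₂·b₃/(b₃+γ₂−a₃). -/
theorem stmt_8 (γ₂ a₃ b₃ : ℝ) (hγ₂ : 0 < γ₂) (ha₃ : 0 < a₃) (hb₃ : 0 < b₃)
    (hga : a₃ < γ₂)
    (r₂ r₃ : (Fin 4 → ℝ) → ℝ)
    (hr₂ : ∀ q, r₂ q = (q 0 + q 1) * γ₂)
    (hr₃ : ∀ q, r₃ q = q 0 * a₃ + q 2 * b₃)
    (p : Fin 4 → ℝ)
    (hp : p = ![b₃ / (b₃ + γ₂ - a₃), 0, (γ₂ - a₃) / (b₃ + γ₂ - a₃), 0]) :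
    (∀ i, 0 ≤ p i) ∧ p 0 + p 1 + p 2 + p 3 = 1 ∧
    r₂ p = r₃ p ∧ r₂ p = γ₂ * b₃ / (b₃ + γ₂ - a₃) ∧
    ∀ q : Fin 4 → ℝ, (∀ i, 0 ≤ q i) → q 0 + q 1 + q 2 + q 3 = 1 →
      r₂ q = r₃ q → r₂ q ≤ γ₂ * b₃ / (b₃ + γ₂ - a₃) :=
  stmt_8_general γ₂ a₃ b₃ ha₃ hb₃ hga r₂ r₃ hr₂ hr₃ p hp
end

section
/- In the rSNR-degraded phase-fading HD-MRC, suppose node B+1 always listens under schedule p (i.e., p assigns zero probability to states where node B+1 transmits). Then the reception rate of node B+2 satisfies r_{B+2}(p) ≤ Σ_s p(s) Γ( (Σ_{i ≤ B transmitting in s} λ_{i,B+2} P_i)/N_{B+2} ) < r_{B+1}(p), provided r_{B+1}(p) > 0. -/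
/-!
Because node `B+1` always listens, in every state that occurs node `B+2` hears at most the
nodes `1, …, B`, which gives the first inequality. For the same transmitters the degradedness
condition makes every term of the received SNR, hence the SNR itself, strictly larger at `B+1`
than at `B+2`; averaging the strictly monotone `Γ` over a schedule that gives positive weight to
some state gives the strict inequality.
-/

open Finset Real

lemma inter_Ico_succ_of_notMem {T : Finset ℕ} {a m : ℕ} (hm : m ∉ T) :
    T ∩ Ico a (m + 1) = T ∩ Ico a m := by
  ext i
  simp only [mem_inter, mem_Ico]
  constructor
  · rintro ⟨hi, hai, him⟩
    exact ⟨hi, hai, lt_of_le_of_ne (Nat.lt_succ_iff.mp him) (by rintro rfl; exact hm hi)⟩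
  · rintro ⟨hi, hai, him⟩
    exact ⟨hi, hai, by omega⟩

lemma sum_div_lt_sum_div {ι : Type*} {A : Finset ι} (hA : A.Nonempty) {f g : ι → ℝ} {a b : ℝ}
    (hfg : ∀ i ∈ A, f i / a < g i / b) : (∑ i ∈ A, f i) / a < (∑ i ∈ A, g i) / b := by
  simpa only [sum_div] using sum_lt_sum_of_nonempty hA hfg

lemma logb_one_add_lt_logb_one_add {b x y : ℝ} (hb : 1 < b) (hx : 0 ≤ x) (hxy : x < y) :
    logb b (1 + x) < logb b (1 + y) :=
  logb_lt_logb hb (by linarith) (by linarith)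

lemma sum_mul_lt_sum_mul {ι : Type*} [Fintype ι] {p f g : ι → ℝ} (hp : ∀ s, 0 ≤ p s)
    (hfg : ∀ s, f s < g s) (hp_ne : ∃ s, p s ≠ 0) : ∑ s, p s * f s < ∑ s, p s * g s := by
  obtain ⟨s, hs⟩ := hp_ne
  exact sum_lt_sum (fun t _ => mul_le_mul_of_nonneg_left (hfg t).le (hp t))
    ⟨s, mem_univ s, mul_lt_mul_of_pos_left (hfg s) ((hp s).lt_of_ne' hs)⟩

theorem stmt_11_general {S : Type*} [Fintype S]
    (D B : ℕ) (hB1 : 1 ≤ B) (hBD : B + 2 ≤ D)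
    (T : S → Finset ℕ)
    (lam : ℕ → ℕ → ℝ) (P N : ℕ → ℝ)
    (hlam : ∀ i k, 0 ≤ lam i k) (hP : ∀ i, 0 ≤ P i) (hN : ∀ k, 0 < N k)
    (hdeg : ∀ i j k, 1 ≤ i → i < j → j < k → k ≤ D →
      lam i k * P i / N k < lam i j * P i / N j)
    (p : S → ℝ) (hp0 : ∀ s, 0 ≤ p s)
    (hlisten : ∀ s, (B + 1) ∈ T s → p s = 0)
    (Γ : ℝ → ℝ) (hΓ : Γ = fun x => Real.logb 2 (1 + x))
    (r : ℕ → ℝ)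
    (hr : ∀ m, r m = ∑ s, (if m ∈ T s then 0 else
      p s * Γ ((∑ i ∈ insert 1 (T s ∩ Finset.Ico 2 m), lam i m * P i) / N m)))
    (hpos : 0 < r (B + 1)) :
    r (B + 2) ≤ (∑ s, p s *
        Γ ((∑ i ∈ insert 1 (T s ∩ Finset.Ico 2 (B + 1)),
            lam i (B + 2) * P i) / N (B + 2))) ∧
    (∑ s, p s *
        Γ ((∑ i ∈ insert 1 (T s ∩ Finset.Ico 2 (B + 1)),
            lam i (B + 2) * P i) / N (B + 2))) < r (B + 1) := by
  subst hΓ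
  beta_reduce at hr ⊢
  have hsnr_nonneg : ∀ (A : Finset ℕ) k, 0 ≤ (∑ i ∈ A, lam i k * P i) / N k := fun A k =>
    div_nonneg (sum_nonneg fun i _ => mul_nonneg (hlam i k) (hP i)) (hN k).le
  have hdegraded : ∀ s,
      logb 2 (1 + (∑ i ∈ insert 1 (T s ∩ Ico 2 (B + 1)), lam i (B + 2) * P i) / N (B + 2)) <
        logb 2 (1 + (∑ i ∈ insert 1 (T s ∩ Ico 2 (B + 1)), lam i (B + 1) * P i) / N (B + 1)) := by
    intro s
    refine logb_one_add_lt_logb_one_add one_lt_two (hsnr_nonneg _ _)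
      (sum_div_lt_sum_div (insert_nonempty _ _) fun i hi => ?_)
    simp only [mem_insert, mem_inter, mem_Ico] at hi
    exact hdeg i (B + 1) (B + 2) (by omega) (by omega) (by omega) hBD
  have hr_listen : r (B + 1) = ∑ s, p s *
      logb 2 (1 + (∑ i ∈ insert 1 (T s ∩ Ico 2 (B + 1)), lam i (B + 1) * P i) / N (B + 1)) := by
    rw [hr]
    refine sum_congr rfl fun s _ => ?_
    split_ifs with hs
    · simp [hlisten s hs]
    · rfl
  constructor
  · rw [hr]
    refine sum_le_sum fun s _ => ?_
    by_cases hs : B + 1 ∈ T s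
    · simp [hlisten s hs]
    · have hheard : T s ∩ Ico 2 (B + 2) = T s ∩ Ico 2 (B + 1) := inter_Ico_succ_of_notMem hs
      rw [hheard]
      split_ifs
      · have := hsnr_nonneg (insert 1 (T s ∩ Ico 2 (B + 1))) (B + 2)
        exact mul_nonneg (hp0 s) (logb_nonneg one_lt_two (by linarith))
      · exact le_rfl
  · rw [hr_listen] at hpos ⊢
    obtain ⟨s, -, hs⟩ := exists_ne_zero_of_sum_ne_zero hpos.ne'
    exact sum_mul_lt_sum_mul hp0 hdegraded ⟨s, left_ne_zero_of_mul hs⟩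

/-- in the rSNR-degraded phase-fading HD-MRC, if node B+1
always listens under schedule p, then r_{B+2}(p) is at most the average rate
node B+2 would get from the nodes 1,...,B transmitting, which is strictly
below r_{B+1}(p), provided r_{B+1}(p) > 0. -/
theorem stmt_11 {S : Type*} [Fintype S]
    (D B : ℕ) (hB1 : 1 ≤ B) (hBD : B + 2 ≤ D)
    (T : S → Finset ℕ) (hT : ∀ s, T s ⊆ Finset.Ioo 1 D)
    (lam : ℕ → ℕ → ℝ) (P N : ℕ → ℝ)
    (hlam : ∀ i k, 0 ≤ lam i k) (hP : ∀ i, 0 ≤ P i) (hN : ∀ k, 0 < N k)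
    (hdeg : ∀ i j k, 1 ≤ i → i < j → j < k → k ≤ D →
      lam i k * P i / N k < lam i j * P i / N j)
    (p : S → ℝ) (hp0 : ∀ s, 0 ≤ p s) (hp1 : ∑ s, p s = 1)
    (hlisten : ∀ s, (B + 1) ∈ T s → p s = 0)
    (Γ : ℝ → ℝ) (hΓ : Γ = fun x => Real.logb 2 (1 + x))
    (r : ℕ → ℝ)
    (hr : ∀ m, r m = ∑ s, (if m ∈ T s then 0 else
      p s * Γ ((∑ i ∈ insert 1 (T s ∩ Finset.Ico 2 m), lam i m * P i) / N m)))
    (hpos : 0 < r (B + 1)) :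
    r (B + 2) ≤ (∑ s, p s *
        Γ ((∑ i ∈ insert 1 (T s ∩ Finset.Ico 2 (B + 1)),
            lam i (B + 2) * P i) / N (B + 2))) ∧
    (∑ s, p s *
        Γ ((∑ i ∈ insert 1 (T s ∩ Finset.Ico 2 (B + 1)),
            lam i (B + 2) * P i) / N (B + 2))) < r (B + 1) :=
  stmt_11_general D B hB1 hBD T lam P N hlam hP hN hdeg p hp0 hlisten Γ hΓ r hr hpos
end

section
/- Let G ⊆ ℝ^M be compact convex and R_1, ..., R_K : G → ℝ continuous. Suppose p' ∈ G satisfies R_1(p') = ⋯ = R_B(p') and R_1(p') < R_j(p') for all j > B, and suppose p' maximizes R_1 over the set { p ∈ G : R_1(p) = ⋯ = R_B(p) }. If additionally every maximizer p* of min_i R_i over G has its bottleneck set equal to {1,...,B'} for some B' (i.e., {i : R_i(p*) = min_j R_j(p*)} = {1,...,B'}) and p* maximizes R_1 over the corresponding equality set, then min_i R_i(p') = max_{p∈G} min_i R_i(p). -/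
/-!
A maximin optimum `p*` exists by compactness. Its bottleneck set is `{1, …, B'}`, so `p*` itself
satisfies the conditions with `B'`; since `B` is the first index for which they are satisfiable,
`B ≤ B'`. Hence `p*` lies in the equality set of `B`, where `p'` maximizes `R 1`, and
`min R (p*) = R 1 (p*) ≤ R 1 p' = min R p'`.
-/

open Finset

section Bottleneck

variable {α : Type*} {f : ℕ → α} {K B : ℕ} {m : α}

lemma inf'_Icc_eq_apply_one [LinearOrder α] (hK : 1 ≤ K)
    (heq : ∀ i, 1 ≤ i → i ≤ B → f i = f 1)
    (hlt : ∀ j, B < j → j ≤ K → f 1 < f j) :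
    (Icc 1 K).inf' (nonempty_Icc.mpr hK) f = f 1 := by
  refine le_antisymm (inf'_le _ (mem_Icc.mpr ⟨le_rfl, hK⟩)) (le_inf' _ _ fun j hj => ?_)
  obtain ⟨hj1, hjK⟩ := mem_Icc.mp hj
  rcases le_or_gt j B with hjB | hBj
  · exact (heq j hj1 hjB).ge
  · exact (hlt j hBj hjK).le

lemma apply_eq_of_bottleneck_eq_Icc
    (hset : {i | 1 ≤ i ∧ i ≤ K ∧ f i = m} = {i | 1 ≤ i ∧ i ≤ B})
    {i : ℕ} (hi1 : 1 ≤ i) (hiB : i ≤ B) : f i = m := by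
  have hi : i ∈ {i | 1 ≤ i ∧ i ≤ B} := ⟨hi1, hiB⟩
  rw [← hset] at hi
  exact hi.2.2

lemma lt_apply_of_bottleneck_eq_Icc [LinearOrder α] (hm : ∀ j, 1 ≤ j → j ≤ K → m ≤ f j)
    (hB : 1 ≤ B)
    (hset : {i | 1 ≤ i ∧ i ≤ K ∧ f i = m} = {i | 1 ≤ i ∧ i ≤ B})
    {j : ℕ} (hBj : B < j) (hjK : j ≤ K) : m < f j := by
  have hj1 : 1 ≤ j := hB.trans hBj.le
  refine (hm j hj1 hjK).lt_of_ne fun hmj => ?_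
  have hj : j ∈ {i | 1 ≤ i ∧ i ≤ K ∧ f i = m} := ⟨hj1, hjK, hmj.symm⟩
  rw [hset] at hj
  exact hBj.not_ge hj.2

end Bottleneck

theorem stmt_18_general {M : ℕ}
    (G : Set (EuclideanSpace ℝ (Fin M))) (hGne : G.Nonempty)
    (hGcomp : IsCompact G)
    (K : ℕ) (hK : 1 ≤ K)
    (R : ℕ → EuclideanSpace ℝ (Fin M) → ℝ) (hR : ∀ i, ContinuousOn (R i) G)
    (minR : EuclideanSpace ℝ (Fin M) → ℝ)
    (hminR : ∀ p, minR p =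
      (Finset.Icc 1 K).inf' (Finset.nonempty_Icc.mpr hK) (fun i => R i p))
    (B : ℕ)
    (p' : EuclideanSpace ℝ (Fin M))
    (heq : ∀ i, 1 ≤ i → i ≤ B → R i p' = R 1 p')
    (hlt : ∀ j, B < j → j ≤ K → R 1 p' < R j p')
    (hmax : ∀ p ∈ G, (∀ i, 1 ≤ i → i ≤ B → R i p = R 1 p) → R 1 p ≤ R 1 p')
    (hfirst : ∀ B₀, 1 ≤ B₀ → B₀ < B →
      ¬ ∃ q ∈ G, (∀ i, 1 ≤ i → i ≤ B₀ → R i q = R 1 q) ∧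
        (∀ j, B₀ < j → j ≤ K → R 1 q < R j q) ∧
        (∀ p ∈ G, (∀ i, 1 ≤ i → i ≤ B₀ → R i p = R 1 p) → R 1 p ≤ R 1 q))
    (hstruct : ∀ pstar ∈ G, (∀ p ∈ G, minR p ≤ minR pstar) →
      ∃ B', 1 ≤ B' ∧ B' ≤ K ∧
        ({i | 1 ≤ i ∧ i ≤ K ∧ R i pstar = minR pstar} =
          {i | 1 ≤ i ∧ i ≤ B'}) ∧
        (∀ p ∈ G, (∀ i, 1 ≤ i → i ≤ B' → R i p = R 1 p) → R 1 p ≤ R 1 pstar)) :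
    ∀ p ∈ G, minR p ≤ minR p' := by
  have hminRc : ContinuousOn minR G :=
    funext hminR ▸ ContinuousOn.finset_inf'_apply _ fun i _ => hR i
  obtain ⟨ps, hpsG, hps⟩ := hGcomp.exists_isMaxOn hGne hminRc
  obtain ⟨B', hB'1, -, hset, hmax'⟩ := hstruct ps hpsG hps
  have hle : ∀ j, 1 ≤ j → j ≤ K → minR ps ≤ R j ps := fun j hj1 hjK =>
    hminR ps ▸ inf'_le _ (mem_Icc.mpr ⟨hj1, hjK⟩)
  have h1 : R 1 ps = minR ps := apply_eq_of_bottleneck_eq_Icc hset le_rfl hB'1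
  have hfeas : ∀ i, 1 ≤ i → i ≤ B' → R i ps = R 1 ps := fun i hi1 hiB' =>
    (apply_eq_of_bottleneck_eq_Icc hset hi1 hiB').trans h1.symm
  have hgap : ∀ j, B' < j → j ≤ K → R 1 ps < R j ps := fun j hB'j hjK =>
    h1 ▸ lt_apply_of_bottleneck_eq_Icc hle hB'1 hset hB'j hjK
  have hBB' : B ≤ B' := not_lt.mp fun hB'B => hfirst B' hB'1 hB'B
    ⟨ps, hpsG, hfeas, hgap, hmax'⟩
  intro p hp
  calc minR p ≤ minR ps := hps hp
    _ = R 1 ps := h1.symm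
    _ ≤ R 1 p' := hmax ps hpsG fun i hi1 hiB => hfeas i hi1 (hiB.trans hBB')
    _ = minR p' := (hminR p' ▸ inf'_Icc_eq_apply_one hK heq hlt).symm

/-- overall correctness of Algorithm 2 — if p' satisfies the
conditions for the first B for which they are satisfiable, and every maximin
optimizer has bottleneck set an initial segment {1,...,B'} and globally
maximizes R₁ over its equality set, then p' attains the maximin optimum. -/
theorem stmt_18 {M : ℕ}
    (G : Set (EuclideanSpace ℝ (Fin M))) (hGne : G.Nonempty)
    (hGcomp : IsCompact G) (hGconv : Convex ℝ G)
    (K : ℕ) (hK : 1 ≤ K)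
    (R : ℕ → EuclideanSpace ℝ (Fin M) → ℝ) (hR : ∀ i, ContinuousOn (R i) G)
    (minR : EuclideanSpace ℝ (Fin M) → ℝ)
    (hminR : ∀ p, minR p =
      (Finset.Icc 1 K).inf' (Finset.nonempty_Icc.mpr hK) (fun i => R i p))
    (B : ℕ) (hB1 : 1 ≤ B) (hBK : B ≤ K)
    (p' : EuclideanSpace ℝ (Fin M)) (hp'G : p' ∈ G)
    (heq : ∀ i, 1 ≤ i → i ≤ B → R i p' = R 1 p')
    (hlt : ∀ j, B < j → j ≤ K → R 1 p' < R j p')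
    (hmax : ∀ p ∈ G, (∀ i, 1 ≤ i → i ≤ B → R i p = R 1 p) → R 1 p ≤ R 1 p')
    (hfirst : ∀ B₀, 1 ≤ B₀ → B₀ < B →
      ¬ ∃ q ∈ G, (∀ i, 1 ≤ i → i ≤ B₀ → R i q = R 1 q) ∧
        (∀ j, B₀ < j → j ≤ K → R 1 q < R j q) ∧
        (∀ p ∈ G, (∀ i, 1 ≤ i → i ≤ B₀ → R i p = R 1 p) → R 1 p ≤ R 1 q))
    (hstruct : ∀ pstar ∈ G, (∀ p ∈ G, minR p ≤ minR pstar) →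
      ∃ B', 1 ≤ B' ∧ B' ≤ K ∧
        ({i | 1 ≤ i ∧ i ≤ K ∧ R i pstar = minR pstar} =
          {i | 1 ≤ i ∧ i ≤ B'}) ∧
        (∀ p ∈ G, (∀ i, 1 ≤ i → i ≤ B' → R i p = R 1 p) → R 1 p ≤ R 1 pstar)) :
    ∀ p ∈ G, minR p ≤ minR p' :=
  stmt_18_general G hGne hGcomp K hK R hR minR hminR B p' heq hlt hmax hfirst hstruct
end
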